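/- arXiv:0912.4512 — 5 statements merged into one kernel-verified Lean document; each statement's English description precedes it below -/
import Mathlib

section
/- Let R be a commutative ring, G a finite group whose order is invertible in R, and M an R-module equipped with an action of G by R-linear automorphisms. Then for every commutative R-algebra S, the canonical S-linear map (M^G) ⊗_R S → (M ⊗_R S)^G induced by the inclusion M^G ⊆ M is bijective, where G acts on M ⊗_R S through the first tensor factor. -/
/-!
Averaging over `G` gives the Reynolds operator `e = |G|⁻¹ ∑ g, ρ g`, a projection of `M` onto
`M^G`. Its base change `e ⊗ S` is the Reynolds operator of `M ⊗ S`, hence a projection onto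
`(M ⊗ S)^G`; on the other hand, a projection onto a submodule makes the inclusion split, and
splittings survive base change, so `M^G ⊗ S → M ⊗ S` is injective with the same range as `e ⊗ S`.
-/

open TensorProduct

/-- The submodule of elements fixed by every operator in a family of linear
endomorphisms. -/
def fixedSubmodule {R M G : Type*} [CommRing R] [AddCommGroup M] [Module R M]
    (act : G → (M →ₗ[R] M)) : Submodule R M where
  carrier := {m | ∀ g, act g m = m}
  add_mem' := by
    intro a b ha hb g
    rw [map_add, ha g, hb g]
  zero_mem' := by
    intro g
    rw [map_zero]
  smul_mem' := by
    intro r m hm g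
    rw [map_smul, hm g]

namespace LinearMap.IsProj

variable {R M : Type*} [CommRing R] [AddCommGroup M] [Module R M] {p : Submodule R M}
  {f : M →ₗ[R] M} (N : Type*) [AddCommGroup N] [Module R N]

theorem injective_rTensor_subtype (hf : IsProj p f) : Function.Injective (p.subtype.rTensor N) :=
  Function.LeftInverse.injective (g := hf.codRestrict.rTensor N) fun x => by
    rw [← rTensor_comp_apply, show hf.codRestrict ∘ₗ p.subtype = id from
      ext hf.codRestrict_apply_cod, rTensor_id, id_apply]

theorem range_rTensor (hf : IsProj p f) : range (f.rTensor N) = range (p.subtype.rTensor N) := by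
  rw [← hf.subtype_comp_codRestrict, rTensor_comp, range_comp_of_range_eq_top]
  exact range_eq_top.2 (rTensor_surjective N fun x => ⟨x, hf.codRestrict_apply_cod x⟩)

end LinearMap.IsProj

namespace Representation

variable {k G V : Type*} [CommRing k] [Group G] [AddCommGroup V] [Module k V]
  (ρ : Representation k G V) (W : Type*) [AddCommGroup W] [Module k W]

theorem asAlgebraHom_tprod_one :
    asAlgebraHom (ρ.tprod (1 : Representation k G W)) =
      (Module.End.rTensorAlgHom k V W).comp (asAlgebraHom ρ) :=
  MonoidAlgebra.algHom_ext
    (fun g => by simp only [AlgHom.comp_apply, asAlgebraHom_single_one]; rfl) (by ext)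

variable [Fintype G] [Invertible (Fintype.card G : k)]

theorem averageMap_tprod_one :
    averageMap (ρ.tprod (1 : Representation k G W)) = (averageMap ρ).rTensor W := by
  rw [averageMap, asAlgebraHom_tprod_one]
  rfl

theorem injective_rTensor_invariants_subtype :
    Function.Injective (ρ.invariants.subtype.rTensor W) :=
  ρ.isProj_averageMap.injective_rTensor_subtype W

theorem range_rTensor_invariants_subtype :
    LinearMap.range (ρ.invariants.subtype.rTensor W) =
      (ρ.tprod (1 : Representation k G W)).invariants := by
  rw [← ρ.isProj_averageMap.range_rTensor W, ← averageMap_tprod_one, (isProj_averageMap _).range]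

end Representation

/-- Let `R` be a commutative ring, `G` a finite group whose order is
invertible in `R`, and `M` an `R`-module with an action of `G` by `R`-linear
automorphisms.  Then for every commutative `R`-algebra `S`, the canonical map
`(M^G) ⊗[R] S → (M ⊗[R] S)^G` induced by the inclusion `M^G ⊆ M` is bijective, where `G`
acts on `M ⊗[R] S` through the first tensor factor: the map `(M^G) ⊗[R] S → M ⊗[R] S` is
injective with range exactly the invariants of `M ⊗[R] S`. -/
theorem invariants_tensor_base_change
    {R G M : Type*} [CommRing R] [Group G] [Finite G]
    (hG : IsUnit (Nat.card G : R))
    [AddCommGroup M] [Module R M] (ρ : G →* (M ≃ₗ[R] M))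
    (S : Type*) [CommRing S] [Algebra R S] :
    Function.Injective
      (LinearMap.rTensor S (fixedSubmodule (fun g : G => (ρ g).toLinearMap)).subtype) ∧
    LinearMap.range
        (LinearMap.rTensor S (fixedSubmodule (fun g : G => (ρ g).toLinearMap)).subtype) =
      fixedSubmodule (fun g : G => LinearMap.rTensor S (ρ g).toLinearMap) := by
  have : Fintype G := Fintype.ofFinite G
  have : Invertible (Fintype.card G : R) := (Nat.card_eq_fintype_card (α := G) ▸ hG).invertible
  let ρ' : Representation R G M := LinearEquiv.automorphismGroup.toLinearMapMonoidHom.comp ρ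
  -- `fixedSubmodule` of the two actions unfolds to the invariants of `ρ'` and of `ρ'.tprod 1`.
  exact ⟨ρ'.injective_rTensor_invariants_subtype S, ρ'.range_rTensor_invariants_subtype S⟩
end

section
/- Let k be a field, n ≥ 1, and A = k[x₁,…,xₙ] the polynomial ring, and let W be a finite group with |W| invertible in k acting on A by k-algebra automorphisms that stabilize the space of linear forms (a linear action). Assume: (i) there exist homogeneous, algebraically independent polynomials σ₁,…,σₙ such that the invariant ring A^W is generated as a k-algebra by σ₁,…,σₙ; (ii) the Jacobian J = det(∂σᵢ/∂xⱼ) is nonzero; (iii) every p ∈ A satisfying w·p = det(w)·p for all w ∈ W (where det(w) is the determinant of the linear action of w on the space of linear forms) is of the form q·J with q ∈ A^W. Then the W-invariant elements of the module of Kähler differentials Ω¹_{A/k} are exactly the elements of the A^W-submodule generated by dσ₁,…,dσₙ. -/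
/-!
Write an invariant form as `ω = ∑ aⱼ dxⱼ`. Since `w` acts linearly, `dxⱼ` transforms by the
linear part of `w`, so the coordinate matrix of any `n` invariant forms has determinant `f`
with `f = det(w) • w(f)`. This applies to the Jacobian `J` (the forms `dσᵢ`) and to the Cramer
numerators `pᵢ` (the forms `dσ` with `ω` in slot `i`). Applying (iii) to `J ^ (|W| - 1)` forces
`det(w)² = 1`, so the `pᵢ` are anti-invariants, `pᵢ = qᵢ J` with `qᵢ` invariant, and Cramer's
rule turns this into `ω = ∑ qᵢ dσᵢ`.
-/

open MvPolynomial Matrix KaehlerDifferential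

theorem MvPolynomial.IsHomogeneous.eq_sum_coeff_single_smul_X {R ι : Type*} [CommSemiring R]
    [Fintype ι] {p : MvPolynomial ι R} (hp : p.IsHomogeneous 1) :
    p = ∑ j, coeff (Finsupp.single j 1) p • X j := by
  classical
  have hspan : p ∈ Submodule.span R (Set.range X) := by
    rw [← homogeneousSubmodule_one_eq_span_X]
    exact hp
  obtain ⟨c, rfl⟩ := (Submodule.mem_span_range_iff_exists_fun R).1 hspan
  refine Finset.sum_congr rfl fun j _ => ?_
  simp [coeff_sum, coeff_X, Finsupp.single_left_inj]

theorem Module.Basis.repr_sum_smul {ι ι' R M : Type*} [CommSemiring R] [AddCommMonoid M]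
    [Module R M] [Fintype ι'] (b : Module.Basis ι R M) (v : ι' → M) (c : ι' → R) :
    ⇑(b.repr (∑ i, c i • v i)) = b.toMatrix v *ᵥ c := by
  ext j
  simp [Matrix.mulVec, dotProduct, Module.Basis.toMatrix_apply, mul_comm]

theorem Matrix.mulVec_eq_of_cramer_eq_det_smul {n R : Type*} [Fintype n] [DecidableEq n]
    [CommRing R] [IsDomain R] {A : Matrix n n R} {b q : n → R} (hA : A.det ≠ 0)
    (h : cramer A b = A.det • q) : A *ᵥ q = b := by
  have := mulVec_cramer A b
  rwa [h, mulVec_smul, smul_right_inj hA] at this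

theorem Module.Basis.eq_sum_smul_of_det_toMatrix_update_eq {ι R M : Type*} [Fintype ι]
    [DecidableEq ι] [CommRing R] [IsDomain R] [AddCommGroup M] [Module R M]
    (b : Module.Basis ι R M) {v : ι → M} (hv : (b.toMatrix v).det ≠ 0) {x : M} {q : ι → R}
    (h : ∀ i, (b.toMatrix (Function.update v i x)).det = q i * (b.toMatrix v).det) :
    x = ∑ i, q i • v i := by
  refine b.ext_elem fun j => congrFun ?_ j
  rw [b.repr_sum_smul]
  refine (mulVec_eq_of_cramer_eq_det_smul hv (funext fun i => ?_)).symm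
  rw [cramer_apply, ← toMatrix_update, h, Pi.smul_apply, smul_eq_mul, mul_comm]

namespace KaehlerDifferential

variable {k ι : Type*} [CommRing k] [Fintype ι] [DecidableEq ι]
  {φ : MvPolynomial ι k →ₐ[k] MvPolynomial ι k} {M : Matrix ι ι k}
  {θ : Ω[MvPolynomial ι k⁄k] →+ Ω[MvPolynomial ι k⁄k]}

theorem mvPolynomialBasis_repr_apply_of_semilinear (hM : ∀ i, φ (X i) = ∑ j, M i j • X j)
    (hθD : ∀ a, θ (D k _ a) = D k _ (φ a)) (hθs : ∀ a ω, θ (a • ω) = φ a • θ ω)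
    (ω : Ω[MvPolynomial ι k⁄k]) (j : ι) :
    (mvPolynomialBasis k ι).repr (θ ω) j =
      ∑ l, C (M l j) * φ ((mvPolynomialBasis k ι).repr ω l) := by
  have repr_smul (c : k) (x : Ω[MvPolynomial ι k⁄k]) :
      (mvPolynomialBasis k ι).repr (c • x) =
        (C c : MvPolynomial ι k) • (mvPolynomialBasis k ι).repr x := by
    rw [← algebraMap_smul (MvPolynomial ι k) c x, map_smul, algebraMap_eq]
  conv_lhs => rw [← (mvPolynomialBasis k ι).sum_repr ω]
  simp [map_sum, hθs, hθD, hM, repr_smul, Finsupp.single_apply, mul_comm]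

theorem det_toMatrix_mvPolynomialBasis_eq_smul_of_fixed (hM : ∀ i, φ (X i) = ∑ j, M i j • X j)
    (hθD : ∀ a, θ (D k _ a) = D k _ (φ a)) (hθs : ∀ a ω, θ (a • ω) = φ a • θ ω)
    (v : ι → Ω[MvPolynomial ι k⁄k]) (hv : ∀ i, θ (v i) = v i) :
    ((mvPolynomialBasis k ι).toMatrix v).det =
      M.det • φ ((mvPolynomialBasis k ι).toMatrix v).det := by
  have hmat : (mvPolynomialBasis k ι).toMatrix v =
      (M.map C)ᵀ * ((mvPolynomialBasis k ι).toMatrix v).map φ := by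
    ext j i
    rw [Module.Basis.toMatrix_apply, ← hv i,
      mvPolynomialBasis_repr_apply_of_semilinear hM hθD hθs, mul_apply]
    rfl
  conv_lhs => rw [hmat]
  rw [det_mul, det_transpose, smul_eq_C_mul, RingHom.map_det, AlgHom.map_det]
  rfl

end KaehlerDifferential

theorem eq_pow_smul_map_pow {k A W : Type*} [CommSemiring k] [Semiring A] [Algebra k A]
    [Monoid W] (ρ : W →* A ≃ₐ[k] A) {c : k} {x : A} {w : W} (h : x = c • ρ w x) (m : ℕ) :
    x = c ^ m • ρ (w ^ m) x := by
  induction m with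
  | zero => simp
  | succ m ih =>
    conv_lhs => rw [ih, h]
    rw [map_smul, smul_smul, ← pow_succ, pow_succ w, map_mul, AlgEquiv.mul_apply]

theorem pow_card_eq_one_of_eq_smul_map {k A W : Type*} [Field k] [Ring A] [Algebra k A]
    [Group W] (ρ : W →* A ≃ₐ[k] A) {c : k} {x : A} {w : W} (hx : x ≠ 0)
    (h : x = c • ρ w x) : c ^ Nat.card W = 1 := by
  have := eq_pow_smul_map_pow ρ h (Nat.card W)
  rw [pow_card_eq_one', map_one, AlgEquiv.one_apply] at this
  exact smul_left_injective k hx (by simpa using this.symm)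

theorem sq_eq_one_of_forall_eq_smul_map {k A W : Type*} [Field k] [Ring A] [IsDomain A]
    [Algebra k A] [Group W] [Finite W] (ρ : W →* A ≃ₐ[k] A) (χ : W → k) {J : A} (hJ : J ≠ 0)
    (hJχ : ∀ w, J = χ w • ρ w J)
    (hanti : ∀ p : A, (∀ w, ρ w p = χ w • p) → ∃ q, (∀ w, ρ w q = q) ∧ p = q * J) (w : W) :
    χ w ^ 2 = 1 := by
  set N := Nat.card W
  have hN : N - 1 + 1 = N := Nat.sub_add_cancel Nat.card_pos
  have hpowJ (v : W) : J ^ (N - 1) = χ v ^ (N - 1) • ρ v (J ^ (N - 1)) := by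
    conv_lhs => rw [hJχ v]
    rw [smul_pow, map_pow]
  obtain ⟨q, hq, hJq⟩ := hanti (J ^ (N - 1)) fun v => by
    conv_rhs => rw [hpowJ v, smul_smul, ← pow_succ', hN,
      pow_card_eq_one_of_eq_smul_map ρ hJ (hJχ v), one_smul]
  have hρJq : χ w • ρ w (J ^ (N - 1)) = J ^ (N - 1) := by
    rw [hJq, map_mul, hq, ← mul_smul_comm, ← hJχ]
  have hne : ρ w (J ^ (N - 1)) ≠ 0 := by simpa using pow_ne_zero _ hJ
  have hχ : χ w = χ w ^ (N - 1) := smul_left_injective k hne (hρJq.trans (hpowJ w))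
  calc χ w ^ 2 = χ w ^ (N - 1) * χ w := by rw [← hχ, sq]
    _ = 1 := by rw [← pow_succ, hN, pow_card_eq_one_of_eq_smul_map ρ hJ (hJχ w)]

theorem invariant_differentials_eq_span_of_dsigma_general
    {k : Type*} [Field k] (n : ℕ)
    {W : Type*} [Group W] [Finite W]
    (ρ : W →* (MvPolynomial (Fin n) k ≃ₐ[k] MvPolynomial (Fin n) k))
    -- the action is linear: it stabilizes the space of linear forms
    (hlin : ∀ (w : W) (p : MvPolynomial (Fin n) k),
      p.IsHomogeneous 1 → (ρ w p).IsHomogeneous 1)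
    (σ : Fin n → MvPolynomial (Fin n) k)
    -- (i) the σᵢ are homogeneous, algebraically independent, and generate `A^W`
    (hgen : ∀ p : MvPolynomial (Fin n) k,
      (∀ w : W, ρ w p = p) ↔ p ∈ Algebra.adjoin k (Set.range σ))
    -- (ii) the Jacobian is nonzero
    (hJ : Matrix.det (Matrix.of fun i j => MvPolynomial.pderiv j (σ i)) ≠ 0)
    -- (iii) anti-invariants are `A^W`-multiples of the Jacobian
    (hanti : ∀ p : MvPolynomial (Fin n) k,
      (∀ w : W, ρ w p =
        Matrix.det (Matrix.of fun i j =>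
          MvPolynomial.coeff (Finsupp.single j 1) (ρ w (MvPolynomial.X i))) • p) →
      ∃ q : MvPolynomial (Fin n) k, (∀ w : W, ρ w q = q) ∧
        p = q * Matrix.det (Matrix.of fun i j => MvPolynomial.pderiv j (σ i)))
    -- the functorial action of `W` on the Kähler differentials
    (θ : W → (KaehlerDifferential k (MvPolynomial (Fin n) k) →+
        KaehlerDifferential k (MvPolynomial (Fin n) k)))
    (hθD : ∀ (w : W) (a : MvPolynomial (Fin n) k),
      θ w (KaehlerDifferential.D k (MvPolynomial (Fin n) k) a) =
        KaehlerDifferential.D k (MvPolynomial (Fin n) k) (ρ w a))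
    (hθs : ∀ (w : W) (a : MvPolynomial (Fin n) k)
        (ω : KaehlerDifferential k (MvPolynomial (Fin n) k)),
      θ w (a • ω) = (ρ w a) • θ w ω) :
    ∀ ω : KaehlerDifferential k (MvPolynomial (Fin n) k),
      (∀ w : W, θ w ω = ω) ↔
        ∃ c : Fin n → MvPolynomial (Fin n) k,
          (∀ i, ∀ w : W, ρ w (c i) = c i) ∧
          ω = ∑ i, c i • KaehlerDifferential.D k (MvPolynomial (Fin n) k) (σ i) := by
  have hσ (w : W) (i : Fin n) : ρ w (σ i) = σ i :=
    (hgen (σ i)).2 (Algebra.subset_adjoin ⟨i, rfl⟩) w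
  have hdet (w : W) (v : Fin n → Ω[MvPolynomial (Fin n) k⁄k]) (hv : ∀ i, θ w (v i) = v i) :
      ((mvPolynomialBasis k (Fin n)).toMatrix v).det =
        (of fun i j => coeff (Finsupp.single j 1) (ρ w (X i))).det •
          ρ w ((mvPolynomialBasis k (Fin n)).toMatrix v).det :=
    det_toMatrix_mvPolynomialBasis_eq_smul_of_fixed (φ := (ρ w).toAlgHom)
      (fun i => (hlin w _ (isHomogeneous_X k i)).eq_sum_coeff_single_smul_X)
      (hθD w) (hθs w) v hv
  set b := mvPolynomialBasis k (Fin n)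
  set dσ : Fin n → Ω[MvPolynomial (Fin n) k⁄k] := fun i => D k _ (σ i)
  have hJac : (of fun i j => pderiv j (σ i)) = (b.toMatrix dσ)ᵀ := by
    ext i j
    simp [b, dσ, Module.Basis.toMatrix_apply]
  rw [hJac, det_transpose] at hJ hanti
  have hdet_sq := sq_eq_one_of_forall_eq_smul_map ρ _ hJ
    (fun w => hdet w dσ fun i => by simp [dσ, hθD, hσ]) hanti
  intro ω
  constructor
  · intro hω
    have hupdate (i : Fin n) : ∃ q, (∀ w, ρ w q = q) ∧
        (b.toMatrix (Function.update dσ i ω)).det = q * (b.toMatrix dσ).det := by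
      refine hanti _ fun w => ?_
      have hinv (j : Fin n) : θ w (Function.update dσ i ω j) = Function.update dσ i ω j := by
        rcases eq_or_ne j i with rfl | hj
        · simp [hω]
        · simp [hj, dσ, hθD, hσ]
      conv_rhs => rw [hdet w _ hinv, smul_smul, ← sq, hdet_sq w, one_smul]
    choose q hq hqJ using hupdate
    exact ⟨q, hq, b.eq_sum_smul_of_det_toMatrix_update_eq hJ hqJ⟩
  · rintro ⟨c, hc, rfl⟩ w
    simp only [map_sum, hθs, hθD, hc, hσ]

/-- Let `k` be a field, `A = k[x₁,…,xₙ]` (`n ≥ 1`), and `W` a finite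
group of order invertible in `k` acting linearly on `A` by `k`-algebra automorphisms
(stabilizing the space of linear forms).  Assume: (i) the invariant ring `A^W` is
generated by homogeneous, algebraically independent polynomials `σ₁,…,σₙ`;
(ii) the Jacobian `J = det(∂σᵢ/∂xⱼ)` is nonzero; (iii) every `p` with
`w·p = det(w)·p` for all `w` is of the form `q·J` with `q ∈ A^W`.  Then the
`W`-invariant Kähler differentials of `A` over `k` (for the functorial action
`θ w (d a) = d (w·a)`) are exactly the `A^W`-linear combinations of `dσ₁,…,dσₙ`. -/
theorem invariant_differentials_eq_span_of_dsigma
    {k : Type*} [Field k] (n : ℕ) (hn : 1 ≤ n)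
    {W : Type*} [Group W] [Finite W] (hW : (Nat.card W : k) ≠ 0)
    (ρ : W →* (MvPolynomial (Fin n) k ≃ₐ[k] MvPolynomial (Fin n) k))
    -- the action is linear: it stabilizes the space of linear forms
    (hlin : ∀ (w : W) (p : MvPolynomial (Fin n) k),
      p.IsHomogeneous 1 → (ρ w p).IsHomogeneous 1)
    (σ : Fin n → MvPolynomial (Fin n) k)
    -- (i) the σᵢ are homogeneous, algebraically independent, and generate `A^W`
    (hhom : ∀ i, ∃ d : ℕ, (σ i).IsHomogeneous d)
    (hai : AlgebraicIndependent k σ)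
    (hgen : ∀ p : MvPolynomial (Fin n) k,
      (∀ w : W, ρ w p = p) ↔ p ∈ Algebra.adjoin k (Set.range σ))
    -- (ii) the Jacobian is nonzero
    (hJ : Matrix.det (Matrix.of fun i j => MvPolynomial.pderiv j (σ i)) ≠ 0)
    -- (iii) anti-invariants are `A^W`-multiples of the Jacobian
    (hanti : ∀ p : MvPolynomial (Fin n) k,
      (∀ w : W, ρ w p =
        Matrix.det (Matrix.of fun i j =>
          MvPolynomial.coeff (Finsupp.single j 1) (ρ w (MvPolynomial.X i))) • p) →
      ∃ q : MvPolynomial (Fin n) k, (∀ w : W, ρ w q = q) ∧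
        p = q * Matrix.det (Matrix.of fun i j => MvPolynomial.pderiv j (σ i)))
    -- the functorial action of `W` on the Kähler differentials
    (θ : W → (KaehlerDifferential k (MvPolynomial (Fin n) k) →+
        KaehlerDifferential k (MvPolynomial (Fin n) k)))
    (hθD : ∀ (w : W) (a : MvPolynomial (Fin n) k),
      θ w (KaehlerDifferential.D k (MvPolynomial (Fin n) k) a) =
        KaehlerDifferential.D k (MvPolynomial (Fin n) k) (ρ w a))
    (hθs : ∀ (w : W) (a : MvPolynomial (Fin n) k)
        (ω : KaehlerDifferential k (MvPolynomial (Fin n) k)),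
      θ w (a • ω) = (ρ w a) • θ w ω) :
    ∀ ω : KaehlerDifferential k (MvPolynomial (Fin n) k),
      (∀ w : W, θ w ω = ω) ↔
        ∃ c : Fin n → MvPolynomial (Fin n) k,
          (∀ i, ∀ w : W, ρ w (c i) = c i) ∧
          ω = ∑ i, c i • KaehlerDifferential.D k (MvPolynomial (Fin n) k) (σ i) :=
  invariant_differentials_eq_span_of_dsigma_general n ρ hlin σ hgen hJ hanti θ hθD hθs
end

section
/- With the setup described in the context, the k⟦X⟧-submodule S of V ⊗_k k⟦X⟧ generated by the σ-fixed elements equals the direct sum over 0 ≤ i < m of X^{(m−i) mod m}·(V_i ⊗_k k⟦X⟧), and the quotient (V ⊗_k k⟦X⟧)/S is a finite-dimensional k-vector space of dimension Σ_{i=1}^{m−1} (m−i)·dim_k V_i. -/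
/-!
Since `X ^ m - 1 = ∏ (X - ζ ^ i)` has pairwise coprime factors and kills `g`, `V` is the direct
sum of the eigenspaces `V_i`. In a basis of `V` adapted to this decomposition, `σ` acts on a
coordinate `f` of weight `i` by `f ↦ ζ ^ i • f(ζ X)`, which multiplies the `n`-th coefficient by
`ζ ^ (i + n)`. Hence the coordinates of a fixed element of weight `i` are divisible by
`X ^ ((m - i) % m)`, while conversely `X ^ ((m - i) % m) ⊗ v` is fixed for `v ∈ V_i`. So `S` is
exactly the submodule cut out by these divisibility conditions, and the quotient is the product,
over the basis vectors, of the spaces `k⟦X⟧ ⧸ (X ^ ((m - i) % m))` of dimension `(m - i) % m`.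
-/

open TensorProduct

namespace Polynomial

theorem iSup_ker_aeval_eq_ker_aeval_prod {R M ι : Type*} [CommRing R] [AddCommGroup M]
    [Module R M] (f : Module.End R M) (s : Finset ι) (p : ι → R[X])
    (hp : (s : Set ι).Pairwise fun i j => IsCoprime (p i) (p j)) :
    ⨆ i ∈ s, LinearMap.ker (aeval f (p i)) = LinearMap.ker (aeval f (∏ i ∈ s, p i)) := by
  classical
  induction s using Finset.induction_on with
  | empty => simp [Module.End.one_eq_id]
  | insert a s ha ih =>
    rw [Finset.coe_insert, Set.pairwise_insert_of_notMem ha] at hp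
    rw [Finset.iSup_insert, ih hp.1, Finset.prod_insert ha,
      sup_ker_aeval_eq_ker_aeval_mul_of_coprime f
        (IsCoprime.prod_right fun i hi => (hp.2 i hi).1)]

end Polynomial

namespace Module.End

open Polynomial

section CommRing

variable {R M : Type*} [CommRing R] [AddCommGroup M] [Module R M] (f : End R M) (μ : R)

theorem eigenspace_eq_ker_sub_smul_id :
    f.eigenspace μ = LinearMap.ker (f - μ • LinearMap.id) := by
  rw [eigenspace_def, one_eq_id]

theorem eigenspace_eq_ker_aeval_X_sub_C :
    f.eigenspace μ = LinearMap.ker (aeval f (X - C μ)) := by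
  rw [eigenspace_def, map_sub, aeval_X, aeval_C, Algebra.algebraMap_eq_smul_one]

end CommRing

variable {k V : Type*} [Field k] [AddCommGroup V] [Module k V] {m : ℕ} [NeZero m] {ζ : k}

theorem iSup_eigenspace_pow_eq_top (hζ : IsPrimitiveRoot ζ m) {f : End k V}
    (hf : f ^ m = 1) : ⨆ i : Fin m, f.eigenspace (ζ ^ (i : ℕ)) = ⊤ := by
  have hroots : ⨆ μ ∈ nthRootsFinset m (1 : k), f.eigenspace μ = ⊤ := by
    simp_rw [eigenspace_eq_ker_aeval_X_sub_C]
    rw [iSup_ker_aeval_eq_ker_aeval_prod f _ (fun μ => X - C μ)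
        ((pairwise_coprime_X_sub_C Function.injective_id).set_pairwise _),
      ← X_pow_sub_one_eq_prod (Nat.pos_of_neZero m) hζ]
    simp [hf]
  rw [eq_top_iff, ← hroots]
  refine iSup₂_le fun μ hμ => ?_
  obtain ⟨i, hi, rfl⟩ :=
    hζ.eq_pow_of_pow_eq_one ((mem_nthRootsFinset (Nat.pos_of_neZero m) 1).1 hμ)
  exact le_iSup (fun i : Fin m => f.eigenspace (ζ ^ (i : ℕ))) ⟨i, hi⟩

theorem isInternal_eigenspace_pow (hζ : IsPrimitiveRoot ζ m) {f : End k V}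
    (hf : f ^ m = 1) : DirectSum.IsInternal fun i : Fin m => f.eigenspace (ζ ^ (i : ℕ)) :=
  (DirectSum.isInternal_submodule_iff_iSupIndep_and_iSup_eq_top _).2
    ⟨f.eigenspaces_iSupIndep.comp fun i j h => Fin.ext (hζ.pow_inj i.2 j.2 h),
      iSup_eigenspace_pow_eq_top hζ hf⟩

end Module.End

open PowerSeries

namespace PowerSeries

variable {R : Type*} [CommRing R]

theorem rescale_smul (a c : R) (f : R⟦X⟧) : rescale a (c • f) = c • rescale a f := by
  ext n
  simp [coeff_rescale, mul_left_comm]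

theorem rescale_X_pow (a : R) (n : ℕ) : rescale a (X ^ n : R⟦X⟧) = a ^ n • X ^ n := by
  rw [map_pow, rescale_X, mul_pow, ← map_pow, smul_eq_C_mul]

theorem X_pow_dvd_of_smul_rescale_eq [IsDomain R] {m i : ℕ} {ζ : R}
    (hζ : IsPrimitiveRoot ζ m) (hi : i < m) {f : R⟦X⟧} (hf : ζ ^ i • rescale ζ f = f) :
    X ^ ((m - i) % m) ∣ f := by
  rw [X_pow_dvd_iff]
  intro n hn
  have hcoeff : ζ ^ (i + n) * coeff n f = coeff n f := by
    simpa [coeff_rescale, pow_add, mul_assoc] using congrArg (coeff n) hf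
  have hin : i + n ≠ 0 ∧ i + n < m := by
    rcases Nat.eq_zero_or_pos i with rfl | hi0
    · simp at hn
    · rw [Nat.mod_eq_of_lt (by omega)] at hn
      omega
  by_contra h
  exact hζ.pow_ne_one_of_pos_of_lt hin.1 hin.2
    (mul_right_cancel₀ h (hcoeff.trans (one_mul _).symm))

end PowerSeries

namespace Module.Basis

theorem repr_map_eq_mul_of_forall_eq_smul {ι R V : Type*} [CommRing R] [AddCommGroup V]
    [Module R V] (b : Basis ι R V) {g : End R V} {c : ι → R} (hb : ∀ r, g (b r) = c r • b r)
    (v : V) (r : ι) : b.repr (g v) r = c r * b.repr v r := by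
  have : (Finsupp.lapply r ∘ₗ b.repr.toLinearMap) ∘ₗ g =
      c r • (Finsupp.lapply r ∘ₗ b.repr.toLinearMap) :=
    b.ext fun s => by rcases eq_or_ne s r with rfl | h <;> simp [*]
  exact LinearMap.congr_fun this v

section XPowDvd

variable {k M ι : Type*} [CommRing k] [AddCommGroup M] [Module k⟦X⟧ M]
  (B : Basis ι k⟦X⟧ M) (d : ι → ℕ)

noncomputable def xPowDvdSubmodule : Submodule k⟦X⟧ M :=
  ⨅ r, Submodule.comap (B.coord r) (Ideal.span {(X : k⟦X⟧) ^ d r})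

theorem mem_xPowDvdSubmodule {x : M} :
    x ∈ B.xPowDvdSubmodule d ↔ ∀ r, X ^ d r ∣ B.repr x r := by
  simp [xPowDvdSubmodule, Ideal.mem_span_singleton]

variable [Module k M] [IsScalarTower k k⟦X⟧ M]

noncomputable def lowCoeffs : M →ₗ[k] (r : ι) → Fin (d r) → k :=
  LinearMap.pi fun r => LinearMap.pi fun n => coeff (n : ℕ) ∘ₗ (B.coord r).restrictScalars k

theorem lowCoeffs_apply (x : M) (r : ι) (n : Fin (d r)) :
    B.lowCoeffs d x r n = coeff n (B.repr x r) :=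
  rfl

theorem ker_lowCoeffs :
    LinearMap.ker (B.lowCoeffs d) = (B.xPowDvdSubmodule d).restrictScalars k := by
  ext x
  simp only [LinearMap.mem_ker, Submodule.restrictScalars_mem, mem_xPowDvdSubmodule,
    X_pow_dvd_iff, funext_iff, lowCoeffs_apply, Pi.zero_apply]
  exact forall_congr' fun r => ⟨fun h n hn => h ⟨n, hn⟩, fun h n => h n n.2⟩

theorem lowCoeffs_surjective [Finite ι] : Function.Surjective (B.lowCoeffs d) := by
  intro q
  refine ⟨B.equivFun.symm fun r => PowerSeries.mk fun n =>
    if h : n < d r then q r ⟨n, h⟩ else 0, ?_⟩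
  ext r n
  simp [lowCoeffs_apply, ← B.equivFun_apply]

noncomputable def quotientXPowDvdEquiv [Finite ι] :
    (M ⧸ (B.xPowDvdSubmodule d).restrictScalars k) ≃ₗ[k] (r : ι) → Fin (d r) → k :=
  (Submodule.quotEquivOfEq _ _ (B.ker_lowCoeffs d).symm).trans
    ((B.lowCoeffs d).quotKerEquivOfSurjective (B.lowCoeffs_surjective d))

end XPowDvd

end Module.Basis

noncomputable def twistedEigenSpan {k V : Type*} [Field k] [AddCommGroup V] [Module k V]
    (g : Module.End k V) (ζ : k) (m : ℕ) (i : Fin m) : Submodule k⟦X⟧ (k⟦X⟧ ⊗[k] V) :=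
  Submodule.span k⟦X⟧
    {x | ∃ v : V, g v = ζ ^ (i : ℕ) • v ∧ x = ((X : k⟦X⟧) ^ ((m - (i : ℕ)) % m)) ⊗ₜ[k] v}

section FixedSpan

variable {k V ι : Type*} [Field k] [AddCommGroup V] [Module k V] {m : ℕ} {ζ : k}
  {g : Module.End k V} {σ : k⟦X⟧ ⊗[k] V →ₗ[k] k⟦X⟧ ⊗[k] V}

theorem twistedEigenSpan_le_span_fixed (hζ : ζ ^ m = 1)
    (hσ : ∀ (f : k⟦X⟧) (v : V), σ (f ⊗ₜ[k] v) = rescale ζ f ⊗ₜ[k] g v) (i : Fin m) :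
    twistedEigenSpan g ζ m i ≤ Submodule.span k⟦X⟧ {x | σ x = x} := by
  refine Submodule.span_mono ?_
  rintro _ ⟨v, hv, rfl⟩
  have hunit : ζ ^ ((m - (i : ℕ)) % m) * ζ ^ (i : ℕ) = 1 := by
    rcases Nat.eq_zero_or_pos (i : ℕ) with hi | hi
    · simp [hi]
    · rw [Nat.mod_eq_of_lt (by omega), ← pow_add, Nat.sub_add_cancel i.2.le, hζ]
  show σ _ = _
  rw [hσ, hv, rescale_X_pow, ← smul_tmul', tmul_smul, smul_smul, hunit, one_smul]

theorem baseChange_repr_map_eq_smul_rescale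
    (hσ : ∀ (f : k⟦X⟧) (v : V), σ (f ⊗ₜ[k] v) = rescale ζ f ⊗ₜ[k] g v)
    (b : Module.Basis ι k V) {c : ι → k} (hb : ∀ r, g (b r) = c r • b r)
    (x : k⟦X⟧ ⊗[k] V) (r : ι) :
    (b.baseChange k⟦X⟧).repr (σ x) r = c r • rescale ζ ((b.baseChange k⟦X⟧).repr x r) := by
  induction x using TensorProduct.induction_on with
  | zero => simp
  | tmul f v =>
    rw [hσ, Module.Basis.baseChange_repr_tmul, Module.Basis.baseChange_repr_tmul,
      b.repr_map_eq_mul_of_forall_eq_smul hb, mul_smul, rescale_smul]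
  | add x y hx hy => simp [hx, hy]

theorem span_fixed_le_xPowDvdSubmodule (hζ : IsPrimitiveRoot ζ m)
    (hσ : ∀ (f : k⟦X⟧) (v : V), σ (f ⊗ₜ[k] v) = rescale ζ f ⊗ₜ[k] g v)
    (b : Module.Basis ι k V) (w : ι → Fin m) (hb : ∀ r, g (b r) = ζ ^ (w r : ℕ) • b r) :
    Submodule.span k⟦X⟧ {x | σ x = x} ≤
      (b.baseChange k⟦X⟧).xPowDvdSubmodule fun r => (m - (w r : ℕ)) % m := by
  refine Submodule.span_le.2 fun x hx => (Module.Basis.mem_xPowDvdSubmodule _ _).2 fun r => ?_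
  refine X_pow_dvd_of_smul_rescale_eq hζ (w r).2 ?_
  rw [← baseChange_repr_map_eq_smul_rescale hσ b hb, show σ x = x from hx]

theorem xPowDvdSubmodule_le_iSup_twistedEigenSpan [Fintype ι] (b : Module.Basis ι k V)
    (w : ι → Fin m) (hb : ∀ r, g (b r) = ζ ^ (w r : ℕ) • b r) :
    (b.baseChange k⟦X⟧).xPowDvdSubmodule (fun r => (m - (w r : ℕ)) % m) ≤
      ⨆ i, twistedEigenSpan g ζ m i := by
  intro x hx
  rw [← (b.baseChange k⟦X⟧).sum_repr x]
  refine Submodule.sum_mem _ fun r _ => Submodule.mem_iSup_of_mem (w r) ?_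
  obtain ⟨q, hq⟩ := (Module.Basis.mem_xPowDvdSubmodule _ _).1 hx r
  have hgen : ((X : k⟦X⟧) ^ ((m - (w r : ℕ)) % m)) ⊗ₜ[k] b r ∈ twistedEigenSpan g ζ m (w r) :=
    Submodule.subset_span ⟨b r, hb r, rfl⟩
  rw [hq, Module.Basis.baseChange_apply, mul_comm, mul_smul, smul_tmul', smul_eq_mul, mul_one]
  exact Submodule.smul_mem _ q hgen

-- The generators of `twistedEigenSpan g ζ m i` are eigenvectors of `g` base-changed to `k⟦X⟧`,
-- with the pairwise distinct eigenvalues `ζ ^ i`.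
theorem iSupIndep_twistedEigenSpan (hζ : IsPrimitiveRoot ζ m) :
    iSupIndep (twistedEigenSpan g ζ m) := by
  have hinj : Function.Injective fun i : Fin m => algebraMap k k⟦X⟧ (ζ ^ (i : ℕ)) :=
    fun i j h => Fin.ext (hζ.pow_inj i.2 j.2 ((algebraMap k k⟦X⟧).injective h))
  refine ((Module.End.eigenspaces_iSupIndep (LinearMap.baseChange k⟦X⟧ g)).comp hinj).mono
    fun i => Submodule.span_le.2 ?_
  rintro _ ⟨v, hv, rfl⟩
  rw [SetLike.mem_coe, Function.comp_apply, Module.End.mem_eigenspace_iff,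
    LinearMap.baseChange_tmul, hv, tmul_smul, algebraMap_smul]

end FixedSpan

theorem sum_fin_sub_mod_mul_eq_sum_Ico (m : ℕ) (f : ℕ → ℕ) :
    ∑ i : Fin m, (m - i) % m * f i = ∑ i ∈ Finset.Ico 1 m, (m - i) * f i := by
  rcases Nat.eq_zero_or_pos m with rfl | hm
  · simp
  rw [Fin.sum_univ_eq_sum_range (fun i => (m - i) % m * f i), Finset.range_eq_Ico,
    Finset.sum_eq_sum_Ico_succ_bot hm, Nat.sub_zero, Nat.mod_self, zero_mul, zero_add]
  exact Finset.sum_congr rfl fun i hi => by rw [Nat.mod_eq_of_lt (by simp at hi; omega)]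

/-- Let `k` be a field, `ζ ∈ k` a primitive `m`-th root of unity
(`m ≥ 1`), `V` a finite-dimensional `k`-vector space and `g` an automorphism of `V` with
`g^m = 1`, so that `V = ⊕ V_i` with `V_i = ker(g − ζ^i)`.  Let `σ` be the automorphism of
`k⟦X⟧ ⊗ V` with `σ(f ⊗ v) = f(ζX) ⊗ g(v)` and let `S` be the `k⟦X⟧`-submodule generated
by the `σ`-fixed elements.  Then `S` is the direct sum, over `0 ≤ i < m`, of
`X^((m−i) mod m)·(k⟦X⟧ ⊗ V_i)`, and the quotient `(k⟦X⟧ ⊗ V)/S` is a finite-dimensional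
`k`-vector space of dimension `Σ_{i=1}^{m−1} (m−i)·dim V_i`. -/
theorem span_of_fixed_elements_and_quotient_dim
    {k V : Type*} [Field k] [AddCommGroup V] [Module k V] [FiniteDimensional k V]
    {m : ℕ} (hm : 1 ≤ m) {ζ : k} (hζ : IsPrimitiveRoot ζ m)
    (g : V ≃ₗ[k] V) (hg : g ^ m = 1)
    (σ : PowerSeries k ⊗[k] V →ₗ[k] PowerSeries k ⊗[k] V)
    (hσ : ∀ (f : PowerSeries k) (v : V),
      σ (f ⊗ₜ[k] v) = PowerSeries.rescale ζ f ⊗ₜ[k] g v) :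
    Submodule.span (PowerSeries k) {x : PowerSeries k ⊗[k] V | σ x = x} =
      (⨆ i : Fin m, Submodule.span (PowerSeries k)
        {x : PowerSeries k ⊗[k] V | ∃ v : V, g v = ζ ^ (i : ℕ) • v ∧
          x = ((PowerSeries.X : PowerSeries k) ^ ((m - (i : ℕ)) % m)) ⊗ₜ[k] v}) ∧
    iSupIndep (fun i : Fin m => Submodule.span (PowerSeries k)
        {x : PowerSeries k ⊗[k] V | ∃ v : V, g v = ζ ^ (i : ℕ) • v ∧
          x = ((PowerSeries.X : PowerSeries k) ^ ((m - (i : ℕ)) % m)) ⊗ₜ[k] v}) ∧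
    FiniteDimensional k
      ((PowerSeries k ⊗[k] V) ⧸
        (Submodule.span (PowerSeries k)
          {x : PowerSeries k ⊗[k] V | σ x = x}).restrictScalars k) ∧
    Module.finrank k
        ((PowerSeries k ⊗[k] V) ⧸
          (Submodule.span (PowerSeries k)
            {x : PowerSeries k ⊗[k] V | σ x = x}).restrictScalars k) =
      ∑ i ∈ Finset.Ico 1 m, (m - i) *
        Module.finrank k (LinearMap.ker ((g : V →ₗ[k] V) - ζ ^ i • LinearMap.id)) := by
  have : NeZero m := ⟨by omega⟩
  have hG : (g : Module.End k V) ^ m = 1 := by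
    have := map_pow LinearEquiv.automorphismGroup.toLinearMapMonoidHom g m
    rwa [hg, map_one, eq_comm] at this
  have hV := Module.End.isInternal_eigenspace_pow hζ hG
  let b := hV.collectedBasis fun i =>
    Module.finBasis k (Module.End.eigenspace (g : Module.End k V) (ζ ^ (i : ℕ)))
  have hb : ∀ r, (g : Module.End k V) (b r) = ζ ^ (r.1 : ℕ) • b r := fun r =>
    Module.End.mem_eigenspace_iff.1 (hV.collectedBasis_mem _ r)
  have hfix_le := span_fixed_le_xPowDvdSubmodule hζ hσ b Sigma.fst hb
  have hle_iSup := xPowDvdSubmodule_le_iSup_twistedEigenSpan b Sigma.fst hb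
  have hiSup_le := iSup_le (twistedEigenSpan_le_span_fixed hζ.pow_eq_one hσ)
  have hS := le_antisymm hfix_le (hle_iSup.trans hiSup_le)
  let e := (b.baseChange k⟦X⟧).quotientXPowDvdEquiv fun r => (m - (r.1 : ℕ)) % m
  refine ⟨le_antisymm (hfix_le.trans hle_iSup) hiSup_le, iSupIndep_twistedEigenSpan hζ, ?_, ?_⟩
  · rw [hS]
    exact e.symm.finiteDimensional
  · rw [hS, e.finrank_eq, Module.finrank_pi_fintype, Fintype.sum_sigma]
    simp only [Module.finrank_fin_fun, Finset.sum_const, Finset.card_univ, Fintype.card_fin,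
      smul_eq_mul]
    rw [← sum_fin_sub_mod_mul_eq_sum_Ico]
    exact Finset.sum_congr rfl fun i _ => by
      rw [mul_comm, Module.End.eigenspace_eq_ker_sub_smul_id]
end

section
/- Let G be a group, τ an automorphism of G, and J a subgroup of G with τ(J) = J. Say two elements j, j′ of J are τ-conjugate in J if j′ = h j τ(h)⁻¹ for some h ∈ J, and define τ-conjugacy in G similarly; write G^τ = {x ∈ G : τ(x) = x}. Consider the right-coset space J\G with the action Jg ↦ Jτ(g), and let (J\G)^τ denote its fixed points. Then: (i) for every fixed coset Jg, the element g·τ(g)⁻¹ lies in J and its τ-conjugacy class in J depends only on the coset Jg; (ii) two fixed cosets Jg and Jg′ yield τ-conjugate elements of J if and only if g′ ∈ J·g·G^τ; (iii) a τ-conjugacy class of J arises in this way if and only if it consists of elements of the form x·τ(x)⁻¹ with x ∈ G. Consequently, the map Jg ↦ [g·τ(g)⁻¹] induces a bijection from the set of orbits of G^τ (acting by right translation) on (J\G)^τ onto the kernel of the natural map of pointed sets from the τ-conjugacy classes of J to the τ-conjugacy classes of G. -/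
/-!
The whole statement is about the Lang map `g ↦ g τ(g)⁻¹`. It is twisted-equivariant,
`jg τ(jg)⁻¹ = j (g τ(g)⁻¹) τ(j)⁻¹`, and its fibres are exactly the right `G^τ`-cosets,
since `a τ(a)⁻¹ = b τ(b)⁻¹` says precisely that `b⁻¹a` is `τ`-fixed. Together these show
that two fixed cosets `Jg`, `Jg'` have `τ`-conjugate images iff `g' ∈ J g G^τ`, so the Lang map
descends to an injection on `G^τ`-orbits, whose image is by construction the set of classes of
elements of the form `x τ(x)⁻¹`.
-/

open Function

theorem Quot.lift_mk_comp_bijective {α β : Type*} {r : α → α → Prop} {s : β → β → Prop}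
    (hs : Equivalence s) (f : α → β) (hf : Surjective f) (hrs : ∀ a b, r a b ↔ s (f a) (f b)) :
    Bijective (Quot.lift (Quot.mk s ∘ f) fun a b hab => Quot.sound ((hrs a b).1 hab)) := by
  refine ⟨?_, ?_⟩
  · rintro ⟨a⟩ ⟨b⟩ hab
    exact Quot.sound ((hrs a b).2 (hs.eqvGen_iff.1 (Quot.eqvGen_exact hab)))
  · rintro ⟨y⟩
    obtain ⟨a, rfl⟩ := hf y
    exact ⟨Quot.mk r a, rfl⟩

section TwistedConj

variable {G F : Type*} [Group G] [FunLike F G G] [MonoidHomClass F G G] (τ : F)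

def TwistedConj (J : Subgroup G) (y y' : G) : Prop :=
  ∃ h ∈ J, y' = h * y * (τ h)⁻¹

theorem TwistedConj.equivalence (J : Subgroup G) : Equivalence (TwistedConj τ J) where
  refl y := ⟨1, J.one_mem, by simp⟩
  symm := by
    rintro y y' ⟨h, hh, rfl⟩
    exact ⟨h⁻¹, J.inv_mem hh, by simp [mul_assoc]⟩
  trans := by
    rintro y y' y'' ⟨h, hh, rfl⟩ ⟨h', hh', rfl⟩
    exact ⟨h' * h, J.mul_mem hh' hh, by simp [mul_assoc]⟩

theorem mul_mul_map_mul_inv (j g : G) :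
    j * g * (τ (j * g))⁻¹ = j * (g * (τ g)⁻¹) * (τ j)⁻¹ := by
  simp [mul_assoc]

theorem mul_inv_map_eq_mul_inv_map_iff (a b : G) :
    a * (τ a)⁻¹ = b * (τ b)⁻¹ ↔ ∃ x, τ x = x ∧ a = b * x := by
  constructor
  · intro hab
    refine ⟨b⁻¹ * a, ?_, by group⟩
    calc τ (b⁻¹ * a) = b⁻¹ * (b * (τ b)⁻¹) * τ a := by rw [map_mul, map_inv]; group
      _ = b⁻¹ * a := by rw [← hab]; group
  · rintro ⟨x, hx, rfl⟩
    simp [hx, mul_assoc]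

theorem twistedConj_mul_inv_map_iff (J : Subgroup G) (g g' : G) :
    TwistedConj τ J (g * (τ g)⁻¹) (g' * (τ g')⁻¹) ↔ ∃ j ∈ J, ∃ x, τ x = x ∧ g' = j * g * x := by
  simp only [TwistedConj, ← mul_mul_map_mul_inv, mul_inv_map_eq_mul_inv_map_iff]

end TwistedConj

theorem twisted_cosets_invariant_bijection_general
    {G : Type*} [Group G] (τ : G ≃* G) (J : Subgroup G) :
    -- (i) fixed cosets give elements of J ...
    (∀ g : G, τ g * g⁻¹ ∈ J → g * (τ g)⁻¹ ∈ J) ∧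
    -- ... whose τ-conjugacy class in J only depends on the coset
    (∀ g j : G, j ∈ J → g * (τ g)⁻¹ ∈ J →
      ∃ h ∈ J, (j * g) * (τ (j * g))⁻¹ = h * (g * (τ g)⁻¹) * (τ h)⁻¹) ∧
    -- (ii)
    (∀ g g' : G, g * (τ g)⁻¹ ∈ J → g' * (τ g')⁻¹ ∈ J →
      ((∃ h ∈ J, g' * (τ g')⁻¹ = h * (g * (τ g)⁻¹) * (τ h)⁻¹) ↔
        ∃ j ∈ J, ∃ x : G, τ x = x ∧ g' = j * g * x)) ∧
    -- (iii)
    (∀ j ∈ J,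
      ((∃ h ∈ J, ∃ g : G, g * (τ g)⁻¹ ∈ J ∧ j = h * (g * (τ g)⁻¹) * (τ h)⁻¹) ↔
        ∃ x : G, j = x * (τ x)⁻¹)) ∧
    -- consequently: the induced map on quotients is a bijection
    ∃ e : Quot (fun g g' : {g : G // g * (τ g)⁻¹ ∈ J} =>
            ∃ j ∈ J, ∃ x : G, τ x = x ∧ (g' : G) = j * (g : G) * x) ≃
          Quot (fun y y' : {j : G // j ∈ J ∧ ∃ x : G, j = x * (τ x)⁻¹} =>
            ∃ h ∈ J, (y' : G) = h * (y : G) * (τ h)⁻¹),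
      ∀ g : {g : G // g * (τ g)⁻¹ ∈ J},
        e (Quot.mk _ g) = Quot.mk _ ⟨(g : G) * (τ (g : G))⁻¹, g.2, ⟨(g : G), rfl⟩⟩ := by
  refine ⟨fun g hg => by simpa using J.inv_mem hg,
    fun g j hj _ => ⟨j, hj, mul_mul_map_mul_inv τ j g⟩,
    fun g g' _ _ => twistedConj_mul_inv_map_iff τ J g g', fun j hj => ⟨?_, ?_⟩, ?_⟩
  · rintro ⟨h, -, g, -, rfl⟩
    exact ⟨h * g, (mul_mul_map_mul_inv τ h g).symm⟩
  · rintro ⟨x, rfl⟩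
    exact ⟨1, J.one_mem, x, hj, by simp⟩
  · let lang : {g : G // g * (τ g)⁻¹ ∈ J} → {j : G // j ∈ J ∧ ∃ x : G, j = x * (τ x)⁻¹} :=
      fun g => ⟨g * (τ g)⁻¹, g.2, g, rfl⟩
    have lang_surjective : Surjective lang := by
      rintro ⟨_, hj, x, rfl⟩
      exact ⟨⟨x, hj⟩, rfl⟩
    exact ⟨Equiv.ofBijective _ (Quot.lift_mk_comp_bijective
      ((TwistedConj.equivalence τ J).comap Subtype.val) lang lang_surjective
      fun g g' => (twistedConj_mul_inv_map_iff τ J g g').symm), fun _ => rfl⟩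

/-- Let `G` be a group, `τ` an automorphism of `G`, and `J` a
`τ`-stable subgroup.  Consider the right-coset space `J\G` with the action
`Jg ↦ Jτ(g)`; a coset `Jg` is fixed iff `τ(g)g⁻¹ ∈ J`.  Then:
(i) for every fixed coset `Jg` the element `g·τ(g)⁻¹` lies in `J`, and its
`τ`-conjugacy class in `J` depends only on the coset;
(ii) two fixed cosets yield `τ`-conjugate elements of `J` iff `g′ ∈ J·g·G^τ`;
(iii) a `τ`-conjugacy class of `J` arises in this way iff it consists of elements of the
form `x·τ(x)⁻¹` with `x ∈ G`.
Consequently `Jg ↦ [g·τ(g)⁻¹]` induces a bijection from the set of `G^τ`-orbits on the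
fixed cosets onto the kernel of the map from the `τ`-conjugacy classes of `J` to those of
`G`. -/
theorem twisted_cosets_invariant_bijection
    {G : Type*} [Group G] (τ : G ≃* G) (J : Subgroup G)
    (hJ : ∀ x : G, τ x ∈ J ↔ x ∈ J) :
    -- (i) fixed cosets give elements of J ...
    (∀ g : G, τ g * g⁻¹ ∈ J → g * (τ g)⁻¹ ∈ J) ∧
    -- ... whose τ-conjugacy class in J only depends on the coset
    (∀ g j : G, j ∈ J → g * (τ g)⁻¹ ∈ J →
      ∃ h ∈ J, (j * g) * (τ (j * g))⁻¹ = h * (g * (τ g)⁻¹) * (τ h)⁻¹) ∧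
    -- (ii)
    (∀ g g' : G, g * (τ g)⁻¹ ∈ J → g' * (τ g')⁻¹ ∈ J →
      ((∃ h ∈ J, g' * (τ g')⁻¹ = h * (g * (τ g)⁻¹) * (τ h)⁻¹) ↔
        ∃ j ∈ J, ∃ x : G, τ x = x ∧ g' = j * g * x)) ∧
    -- (iii)
    (∀ j ∈ J,
      ((∃ h ∈ J, ∃ g : G, g * (τ g)⁻¹ ∈ J ∧ j = h * (g * (τ g)⁻¹) * (τ h)⁻¹) ↔
        ∃ x : G, j = x * (τ x)⁻¹)) ∧
    -- consequently: the induced map on quotients is a bijection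
    ∃ e : Quot (fun g g' : {g : G // g * (τ g)⁻¹ ∈ J} =>
            ∃ j ∈ J, ∃ x : G, τ x = x ∧ (g' : G) = j * (g : G) * x) ≃
          Quot (fun y y' : {j : G // j ∈ J ∧ ∃ x : G, j = x * (τ x)⁻¹} =>
            ∃ h ∈ J, (y' : G) = h * (y : G) * (τ h)⁻¹),
      ∀ g : {g : G // g * (τ g)⁻¹ ∈ J},
        e (Quot.mk _ g) = Quot.mk _ ⟨(g : G) * (τ (g : G))⁻¹, g.2, ⟨(g : G), rfl⟩⟩ :=
  twisted_cosets_invariant_bijection_general τ J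
end

section
/- Let W be a finite group and 0 → A → B → C → 0 a short exact sequence of abelian groups equipped with compatible actions of W by automorphisms (the maps are W-equivariant), with W acting trivially on C. Assume the coinvariant group A_W is finite. Let T = Hom(B, ℂˣ) with the contragredient W-action, and let Z ⊆ T be the image of the injective map Hom(C, ℂˣ) → Hom(B, ℂˣ) induced by B → C. Then Z is contained in the W-invariants T^W, the groups T^W/Z and Hom(A, ℂˣ)^W are finite, and |Ker(A_W → B_W)| · |T^W/Z| = |Hom(A, ℂˣ)^W|. -/
/-- The subgroup of an abelian group `A` generated by the elements `w·x − x` for an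
action `ρ` of `W` on `A`; the quotient `A ⧸ twistSubgroup ρ` is the group of
coinvariants `A_W`. -/
def twistSubgroup {W A : Type*} [AddCommGroup A] (ρ : W → (A ≃+ A)) : AddSubgroup A :=
  AddSubgroup.closure {y : A | ∃ (w : W) (x : A), y = ρ w x - x}

/-- The subgroup `Hom(A, ℂˣ)^W` of `W`-invariant characters of `A`. -/
def invCharSubgroup {W A : Type*} [AddCommGroup A] (ρ : W → (A ≃+ A)) :
    AddSubgroup (A →+ Additive ℂˣ) where
  carrier := {φ | ∀ (w : W) (a : A), φ (ρ w a) = φ a}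
  add_mem' := by
    intro φ ψ hφ hψ w a
    simp only [AddMonoidHom.add_apply, hφ w a, hψ w a]
  zero_mem' := by intro w a; rfl
  neg_mem' := by
    intro φ hφ w a
    simp only [AddMonoidHom.neg_apply, hφ w a]

/-- The subgroup `Z` of `Hom(B, ℂˣ)` consisting of the characters pulled back from `C`
along a homomorphism `p : B →+ C`. -/
def pullbackCharSubgroup {B C : Type*} [AddCommGroup B] [AddCommGroup C] (p : B →+ C) :
    AddSubgroup (B →+ Additive ℂˣ) where
  carrier := {φ | ∃ ψ : C →+ Additive ℂˣ, φ = ψ.comp p}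
  add_mem' := by
    rintro _ _ ⟨ψ₁, rfl⟩ ⟨ψ₂, rfl⟩
    exact ⟨ψ₁ + ψ₂, by ext b; rfl⟩
  zero_mem' := ⟨0, by ext b; rfl⟩
  neg_mem' := by
    rintro _ ⟨ψ, rfl⟩
    exact ⟨-ψ, by ext b; rfl⟩


/-!
Since `ℂˣ` is divisible, characters extend from subgroups, so `Hom(-, ℂˣ)` is exact. Invariant
characters of `B` (resp. `A`) are the characters of the coinvariants `B_W` (resp. `A_W`), and
dualizing the right exact sequence `A_W → B_W → C → 0` identifies `T^W / Z` with the characters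
of `ker(B_W → C) = im(A_W → B_W)`. For a finite abelian group `|Hom(G, ℂˣ)| = |G|`, so the claim
becomes `|ker(A_W → B_W)| · |im(A_W → B_W)| = |A_W|`.
-/

noncomputable instance {k : Type*} [Field k] [IsAlgClosed k] : RootableBy kˣ ℕ :=
  rootableByOfPowLeftSurj _ _ fun hn z => by
    obtain ⟨x, hx⟩ := IsAlgClosed.exists_pow_nat_eq (z : k) (Nat.pos_of_ne_zero hn)
    have hx0 : x ≠ 0 := by
      rintro rfl
      exact z.ne_zero (by rw [← hx, zero_pow hn])
    exact ⟨Units.mk0 x hx0, Units.ext (by simpa using hx)⟩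

noncomputable instance {k : Type*} [Field k] [IsAlgClosed k] : DivisibleBy (Additive kˣ) ℤ :=
  have : RootableBy kˣ ℤ := Group.rootableByIntOfRootableByNat kˣ
  divisibleByOfSMulRightSurj _ _ fun hn z =>
    let ⟨x, hx⟩ := RootableBy.surjective_pow kˣ ℤ hn z.toMul
    ⟨.ofMul x, congrArg Additive.ofMul hx⟩

section Characters

variable {G B M C : Type*} [AddCommGroup G] [AddCommGroup B] [AddCommGroup M] [AddCommGroup C]

lemma nat_card_hom_complexUnits [Finite G] : Nat.card (G →+ Additive ℂˣ) = Nat.card G := by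
  have : NeZero (Monoid.exponent (Multiplicative G)) := ⟨Monoid.exponent_ne_zero_of_finite⟩
  rw [Nat.card_congr AddMonoidHom.toMultiplicativeLeft,
    CommGroup.card_monoidHom_of_hasEnoughRootsOfUnity]
  rfl

instance finite_hom_complexUnits [Finite G] : Finite (G →+ Additive ℂˣ) :=
  Nat.finite_of_card_ne_zero (by rw [nat_card_hom_complexUnits]; exact Nat.card_pos.ne')

lemma compHom'_subtype_surjective (S : AddSubgroup G) :
    Function.Surjective (AddMonoidHom.compHom' S.subtype : (G →+ Additive ℂˣ) →+ _) :=
  (Module.Baer.of_divisible _).extension_property_addMonoidHom _ S.subtype_injective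

lemma ker_compHom'_subtype {g : M →+ C} (hg : Function.Surjective g) :
    (AddMonoidHom.compHom' g.ker.subtype : (M →+ Additive ℂˣ) →+ _).ker =
      pullbackCharSubgroup g := by
  ext φ
  constructor
  · intro hφ
    have hker : g.ker ≤ φ.ker := fun m hm =>
      AddMonoidHom.mem_ker.2 (DFunLike.congr_fun hφ ⟨m, hm⟩)
    exact ⟨g.liftOfSurjective hg ⟨φ, hker⟩, (g.liftOfRightInverse_comp _ _ ⟨φ, hker⟩).symm⟩
  · rintro ⟨ψ, rfl⟩
    ext ⟨m, hm⟩
    simp [AddMonoidHom.mem_ker.1 hm]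

lemma comp_mem_pullbackCharSubgroup_comp_iff {s : B →+ M} (hs : Function.Surjective s)
    {g : M →+ C} {ψ : M →+ Additive ℂˣ} :
    ψ.comp s ∈ pullbackCharSubgroup (g.comp s) ↔ ψ ∈ pullbackCharSubgroup g :=
  ⟨fun ⟨χ, h⟩ => ⟨χ, (AddMonoidHom.cancel_right hs).1 h⟩, fun ⟨χ, h⟩ => ⟨χ, h ▸ rfl⟩⟩

end Characters

lemma QuotientAddGroup.range_map_eq_ker_lift {A B C : Type*} [AddGroup A] [AddGroup B]
    [AddGroup C] {f : A →+ B} {p : B →+ C} (hex : f.range = p.ker) (M : AddSubgroup A) [M.Normal]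
    (N : AddSubgroup B) [N.Normal] (hM : M ≤ N.comap f) (hN : N ≤ p.ker) :
    (map M N f hM).range = (lift N p hN).ker := by
  have h : (map M N f hM).comp (mk' M) = (mk' N).comp f := rfl
  rw [ker_lift, ← hex, ← AddMonoidHom.range_comp, ← h, AddMonoidHom.range_comp, range_mk',
    ← AddMonoidHom.range_eq_map]

lemma QuotientAddGroup.exists_mk_eq_and_mem_iff_mem_ker_map {A B : Type*} [AddGroup A]
    [AddGroup B] {f : A →+ B} (M : AddSubgroup A) [M.Normal] (N : AddSubgroup B) [N.Normal]
    (hM : M ≤ N.comap f) (q : A ⧸ M) :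
    (∃ a : A, (a : A ⧸ M) = q ∧ f a ∈ N) ↔ q ∈ (map M N f hM).ker := by
  rw [ker_map, AddSubgroup.mem_map]
  exact ⟨fun ⟨a, hq, ha⟩ => ⟨a, ha, hq⟩, fun ⟨a, ha, hq⟩ => ⟨a, hq, ha⟩⟩

section Coinvariants

variable {W G H C : Type*} [AddCommGroup G] [AddCommGroup H] [AddCommGroup C]
  (ρ : W → (G ≃+ G))

lemma sub_mem_twistSubgroup (w : W) (g : G) : ρ w g - g ∈ twistSubgroup ρ :=
  AddSubgroup.subset_closure ⟨w, g, rfl⟩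

lemma twistSubgroup_le_ker_iff {P : Type*} [AddGroup P] (φ : G →+ P) :
    twistSubgroup ρ ≤ φ.ker ↔ ∀ (w : W) (g : G), φ (ρ w g) = φ g := by
  simp only [twistSubgroup, AddSubgroup.closure_le, Set.subset_def, SetLike.mem_coe,
    AddMonoidHom.mem_ker]
  constructor
  · intro h w g
    exact sub_eq_zero.1 (by simpa using h _ ⟨w, g, rfl⟩)
  · rintro h _ ⟨w, g, rfl⟩
    simp [h]

lemma mem_invCharSubgroup_iff (φ : G →+ Additive ℂˣ) :
    φ ∈ invCharSubgroup ρ ↔ twistSubgroup ρ ≤ φ.ker :=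
  (twistSubgroup_le_ker_iff ρ φ).symm

noncomputable def invCharEquiv :
    invCharSubgroup ρ ≃+ ((G ⧸ twistSubgroup ρ) →+ Additive ℂˣ) where
  toFun φ := QuotientAddGroup.lift _ φ.1 ((mem_invCharSubgroup_iff ρ φ.1).1 φ.2)
  invFun ψ := ⟨ψ.comp (QuotientAddGroup.mk' _), (mem_invCharSubgroup_iff ρ _).2 fun g hg => by
    simp [(QuotientAddGroup.eq_zero_iff g).2 hg]⟩
  left_inv _ := rfl
  right_inv _ := by ext; rfl
  map_add' _ _ := by ext; rfl

lemma finite_invCharSubgroup [Finite (G ⧸ twistSubgroup ρ)] : Finite (invCharSubgroup ρ) :=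
  .of_equiv _ (invCharEquiv ρ).symm.toEquiv

lemma nat_card_invCharSubgroup [Finite (G ⧸ twistSubgroup ρ)] :
    Nat.card (invCharSubgroup ρ) = Nat.card (G ⧸ twistSubgroup ρ) := by
  rw [Nat.card_congr (invCharEquiv ρ).toEquiv, nat_card_hom_complexUnits]

variable {ρ}

lemma twistSubgroup_le_comap_twistSubgroup {ρ' : W → (H ≃+ H)} {f : G →+ H}
    (hf : ∀ (w : W) (g : G), f (ρ w g) = ρ' w (f g)) :
    twistSubgroup ρ ≤ (twistSubgroup ρ').comap f := by
  rw [twistSubgroup, AddSubgroup.closure_le]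
  rintro _ ⟨w, g, rfl⟩
  simpa [hf] using sub_mem_twistSubgroup ρ' w (f g)

variable {p : G →+ C} (hp : ∀ (w : W) (g : G), p (ρ w g) = p g)
include hp

lemma pullbackCharSubgroup_le_invCharSubgroup : pullbackCharSubgroup p ≤ invCharSubgroup ρ := by
  rintro _ ⟨ψ, rfl⟩
  intro w g
  simp [hp]

lemma twistSubgroup_le_ker : twistSubgroup ρ ≤ p.ker :=
  (twistSubgroup_le_ker_iff ρ p).2 hp

noncomputable def quotientPullbackCharEquiv (hps : Function.Surjective p) :
    invCharSubgroup ρ ⧸ (pullbackCharSubgroup p).addSubgroupOf (invCharSubgroup ρ) ≃+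
      ((QuotientAddGroup.lift _ p (twistSubgroup_le_ker hp)).ker →+ Additive ℂˣ) := by
  let pbar := QuotientAddGroup.lift _ p (twistSubgroup_le_ker hp)
  let Φ : invCharSubgroup ρ →+ (pbar.ker →+ Additive ℂˣ) :=
    (AddMonoidHom.compHom' pbar.ker.subtype).comp (invCharEquiv ρ).toAddMonoidHom
  have hsurj : Function.Surjective Φ :=
    (compHom'_subtype_surjective _).comp (invCharEquiv ρ).surjective
  have hker : Φ.ker = (pullbackCharSubgroup p).addSubgroupOf (invCharSubgroup ρ) := by
    ext φ
    calc φ ∈ Φ.ker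
        ↔ invCharEquiv ρ φ ∈ (AddMonoidHom.compHom' pbar.ker.subtype :
            ((G ⧸ twistSubgroup ρ) →+ Additive ℂˣ) →+ _).ker := Iff.rfl
      _ ↔ invCharEquiv ρ φ ∈ pullbackCharSubgroup pbar := by
        rw [ker_compHom'_subtype (QuotientAddGroup.lift_surjective_of_surjective _ p hps _)]
      _ ↔ (φ : G →+ Additive ℂˣ) ∈ pullbackCharSubgroup p :=
        (comp_mem_pullbackCharSubgroup_comp_iff (QuotientAddGroup.mk'_surjective _)).symm
  exact (QuotientAddGroup.quotientAddEquivOfEq hker.symm).trans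
    (QuotientAddGroup.quotientKerEquivOfSurjective Φ hsurj)

end Coinvariants

theorem card_ker_coinvariants_mul_card_quotient_general
    {W A B C : Type*} [Group W]
    [AddCommGroup A] [AddCommGroup B] [AddCommGroup C]
    (ρA : W →* Multiplicative (AddAut A)) (ρB : W →* Multiplicative (AddAut B))
    (f : A →+ B) (p : B →+ C)
    (hp : Function.Surjective p)
    (hex : f.range = p.ker)
    -- the maps are `W`-equivariant, `W` acting trivially on `C`
    (hfe : ∀ (w : W) (a : A), f (ρA w a) = ρB w (f a))
    (hpe : ∀ (w : W) (b : B), p (ρB w b) = p b)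
    -- `A_W` is finite
    (hAW : Finite (A ⧸ twistSubgroup (fun w : W => ρA w))) :
    pullbackCharSubgroup p ≤ invCharSubgroup (fun w : W => ρB w) ∧
    Finite ((invCharSubgroup (fun w : W => ρB w)) ⧸
      ((pullbackCharSubgroup p).addSubgroupOf (invCharSubgroup (fun w : W => ρB w)))) ∧
    Finite (invCharSubgroup (fun w : W => ρA w)) ∧
    Nat.card {q : A ⧸ twistSubgroup (fun w : W => ρA w) //
        ∃ a : A, QuotientAddGroup.mk a = q ∧ f a ∈ twistSubgroup (fun w : W => ρB w)} *
      Nat.card ((invCharSubgroup (fun w : W => ρB w)) ⧸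
        ((pullbackCharSubgroup p).addSubgroupOf (invCharSubgroup (fun w : W => ρB w)))) =
      Nat.card (invCharSubgroup (fun w : W => ρA w)) := by
  have hcomap : (twistSubgroup fun w => ρA w) ≤ (twistSubgroup fun w => ρB w).comap f :=
    twistSubgroup_le_comap_twistSubgroup hfe
  let fbar := QuotientAddGroup.map _ _ f hcomap
  let pbar := QuotientAddGroup.lift _ p (twistSubgroup_le_ker (ρ := fun w => ρB w) hpe)
  have hexact : fbar.range = pbar.ker := QuotientAddGroup.range_map_eq_ker_lift hex _ _ _ _
  have : Finite pbar.ker := by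
    rw [← hexact]
    exact .of_surjective _ fbar.rangeRestrict_surjective
  let e := quotientPullbackCharEquiv (ρ := fun w => ρB w) hpe hp
  refine ⟨pullbackCharSubgroup_le_invCharSubgroup (ρ := fun w => ρB w) hpe,
    .of_equiv _ e.symm.toEquiv, finite_invCharSubgroup _, ?_⟩
  rw [Nat.card_congr (Equiv.subtypeEquivRight
      (QuotientAddGroup.exists_mk_eq_and_mem_iff_mem_ker_map _ _ hcomap)),
    Nat.card_congr e.toEquiv, nat_card_hom_complexUnits, ← hexact, ← AddSubgroup.index_ker,
    fbar.ker.card_mul_index]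
  exact (nat_card_invCharSubgroup _).symm

/-- Let `W` be a finite group and `0 → A → B → C → 0` a short exact
sequence of abelian groups with compatible `W`-actions, `W` acting trivially on `C`,
and with `A_W` finite.  Let `T = Hom(B, ℂˣ)` (with the contragredient action) and
`Z ⊆ T` the image of `Hom(C, ℂˣ)`.  Then `Z ⊆ T^W`, the groups `T^W/Z` and
`Hom(A, ℂˣ)^W` are finite, and `|Ker(A_W → B_W)| · |T^W/Z| = |Hom(A, ℂˣ)^W|`. -/
theorem card_ker_coinvariants_mul_card_quotient
    {W A B C : Type*} [Group W] [Finite W]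
    [AddCommGroup A] [AddCommGroup B] [AddCommGroup C]
    (ρA : W →* Multiplicative (AddAut A)) (ρB : W →* Multiplicative (AddAut B))
    (f : A →+ B) (p : B →+ C)
    (hf : Function.Injective f) (hp : Function.Surjective p)
    (hex : f.range = p.ker)
    -- the maps are `W`-equivariant, `W` acting trivially on `C`
    (hfe : ∀ (w : W) (a : A), f (ρA w a) = ρB w (f a))
    (hpe : ∀ (w : W) (b : B), p (ρB w b) = p b)
    -- `A_W` is finite
    (hAW : Finite (A ⧸ twistSubgroup (fun w : W => ρA w))) :
    pullbackCharSubgroup p ≤ invCharSubgroup (fun w : W => ρB w) ∧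
    Finite ((invCharSubgroup (fun w : W => ρB w)) ⧸
      ((pullbackCharSubgroup p).addSubgroupOf (invCharSubgroup (fun w : W => ρB w)))) ∧
    Finite (invCharSubgroup (fun w : W => ρA w)) ∧
    Nat.card {q : A ⧸ twistSubgroup (fun w : W => ρA w) //
        ∃ a : A, QuotientAddGroup.mk a = q ∧ f a ∈ twistSubgroup (fun w : W => ρB w)} *
      Nat.card ((invCharSubgroup (fun w : W => ρB w)) ⧸
        ((pullbackCharSubgroup p).addSubgroupOf (invCharSubgroup (fun w : W => ρB w)))) =
      Nat.card (invCharSubgroup (fun w : W => ρA w)) :=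
  card_ker_coinvariants_mul_card_quotient_general ρA ρB f p hp hex hfe hpe hAW
end
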